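/- arXiv:2209.04848 — 4 statements merged into one kernel-verified Lean document; each statement's English description precedes it below -/
import Mathlib

section
/- Let M, N be positive integers, let A, B ∈ ℂ^{M×N} be complex matrices such that B Bᴴ is positive definite. Define the (N+M)×(N+M) block matrix C = [[I_N, Aᴴ], [A, A Aᴴ + B Bᴴ]] and the (N+M)×N matrix E = [I_N; 0_{M×N}] (identity stacked on zeros). Then det(I_N + Aᴴ (B Bᴴ)⁻¹ A) = det(Eᴴ C⁻¹ E). -/
open Matrix
open scoped ComplexOrder

/-!
Eliminating the first block column of `C` by the identity block leaves the Schur complement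
`(A Aᴴ + B Bᴴ) - A Aᴴ = B Bᴴ`, so the top-left block of `C⁻¹` is `I + Aᴴ (B Bᴴ)⁻¹ A`.
Compressing by `E = [I; 0]` extracts exactly that block.
-/

namespace Matrix

variable {m n R : Type*} [Fintype m] [Fintype n] [DecidableEq m]

theorem inv_fromBlocks_one_mul_add [DecidableEq n] [CommRing R] (B : Matrix m n R)
    (C : Matrix n m R) (D : Matrix n n R) (hD : IsUnit D.det) :
    (fromBlocks 1 B C (C * B + D))⁻¹ =
      fromBlocks (1 + B * D⁻¹ * C) (-(B * D⁻¹)) (-(D⁻¹ * C)) D⁻¹ := by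
  refine inv_eq_right_inv ?_
  rw [fromBlocks_multiply, ← fromBlocks_one]
  congr 1
  · simp [Matrix.mul_assoc]
  · simp
  · simp only [Matrix.mul_add, Matrix.add_mul, Matrix.mul_neg, Matrix.mul_one, Matrix.mul_assoc,
      mul_nonsing_inv_cancel_left _ _ hD]
    abel
  · simp [Matrix.add_mul, Matrix.mul_assoc, mul_nonsing_inv _ hD]

theorem conjTranspose_fromRows_one_zero_mul_fromBlocks_mul [Semiring R] [StarRing R]
    (P : Matrix m m R) (Q : Matrix m n R) (T : Matrix n m R) (U : Matrix n n R) :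
    (fromRows 1 0 : Matrix (m ⊕ n) m R)ᴴ * fromBlocks P Q T U *
      (fromRows 1 0 : Matrix (m ⊕ n) m R) = P := by
  rw [conjTranspose_fromRows_eq_fromCols_conjTranspose, fromCols_mul_fromBlocks,
    fromCols_mul_fromRows]
  simp

end Matrix

theorem stmt_0_general (M N : ℕ)
    (A B : Matrix (Fin M) (Fin N) ℂ)
    (hB : (B * Bᴴ).PosDef)
    (C : Matrix (Fin N ⊕ Fin M) (Fin N ⊕ Fin M) ℂ)
    (hC : C = fromBlocks (1 : Matrix (Fin N) (Fin N) ℂ) Aᴴ A (A * Aᴴ + B * Bᴴ))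
    (E : Matrix (Fin N ⊕ Fin M) (Fin N) ℂ)
    (hE : E = Matrix.of (Sum.elim (1 : Matrix (Fin N) (Fin N) ℂ)
      (0 : Matrix (Fin M) (Fin N) ℂ))) :
    ((1 : Matrix (Fin N) (Fin N) ℂ) + Aᴴ * (B * Bᴴ)⁻¹ * A).det
      = (Eᴴ * C⁻¹ * E).det := by
  have hBB : IsUnit (B * Bᴴ).det := (isUnit_iff_isUnit_det _).mp hB.isUnit
  subst hC hE
  rw [inv_fromBlocks_one_mul_add _ _ _ hBB]
  exact congrArg det (conjTranspose_fromRows_one_zero_mul_fromBlocks_mul ..).symm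

/-- Lemma 1 of the paper: for `A, B ∈ ℂ^{M×N}` with `B Bᴴ` positive definite,
`det (I_N + Aᴴ (B Bᴴ)⁻¹ A) = det (Eᴴ C⁻¹ E)` where
`C = [[I_N, Aᴴ], [A, A Aᴴ + B Bᴴ]]` and `E = [I_N; 0]`. -/
theorem stmt_0 (M N : ℕ) (hM : 0 < M) (hN : 0 < N)
    (A B : Matrix (Fin M) (Fin N) ℂ)
    (hB : (B * Bᴴ).PosDef)
    (C : Matrix (Fin N ⊕ Fin M) (Fin N ⊕ Fin M) ℂ)
    (hC : C = fromBlocks (1 : Matrix (Fin N) (Fin N) ℂ) Aᴴ A (A * Aᴴ + B * Bᴴ))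
    (E : Matrix (Fin N ⊕ Fin M) (Fin N) ℂ)
    (hE : E = Matrix.of (Sum.elim (1 : Matrix (Fin N) (Fin N) ℂ)
      (0 : Matrix (Fin M) (Fin N) ℂ))) :
    ((1 : Matrix (Fin N) (Fin N) ℂ) + Aᴴ * (B * Bᴴ)⁻¹ * A).det
      = (Eᴴ * C⁻¹ * E).det :=
  stmt_0_general M N A B hB C hC E hE
end

section
/- Let E ∈ ℂ^{m×n} be a matrix of full column rank (the linear map x ↦ E x is injective). Then the function C ↦ log(Re det(Eᴴ C⁻¹ E)) is convex on the convex set of m×m Hermitian positive definite complex matrices (viewed as a subset of the real vector space of m×m complex matrices). -/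
open Matrix
open scoped ComplexOrder

/-!
The function `f C = log det (Eᴴ C⁻¹ E)` has, at every positive definite `C₀`, an affine minorant
touching it at `C₀`. Write `M₀ = Eᴴ C₀⁻¹ E`, `G = Eᴴ C⁻¹ E` and `P = C₀⁻¹ E M₀⁻¹ Eᴴ C₀⁻¹ ≥ 0`.
Applying `log λ ≤ λ - 1` to the eigenvalues of `G^{-1/2} M₀ G^{-1/2}` gives
`log det M₀ ≤ log det G + tr (M₀ G⁻¹) - n`, and the Schur complement bound `E G⁻¹ Eᴴ ≤ C`, paired
with `P`, gives `tr (M₀ G⁻¹) = tr (P E G⁻¹ Eᴴ) ≤ tr (P C)`. Hence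
`f C ≥ f C₀ + n - tr (P C)`, an affine function of `C` which equals `f C₀` at `C = C₀`.
-/

theorem convexOn_of_forall_exists_affineMap {𝕜 E β : Type*} [Ring 𝕜] [PartialOrder 𝕜]
    [AddCommGroup E] [Module 𝕜 E] [AddCommGroup β] [PartialOrder β] [IsOrderedAddMonoid β]
    [Module 𝕜 β] [PosSMulMono 𝕜 β] {s : Set E} {f : E → β} (hs : Convex 𝕜 s)
    (h : ∀ x ∈ s, ∃ g : E →ᵃ[𝕜] β, g x = f x ∧ ∀ y ∈ s, g y ≤ f y) : ConvexOn 𝕜 s f := by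
  refine ⟨hs, fun x hx y hy a b ha hb hab => ?_⟩
  obtain ⟨g, hgf, hg⟩ := h _ (hs hx hy ha hb hab)
  calc f (a • x + b • y) = g (a • x + b • y) := hgf.symm
    _ = a • g x + b • g y := Convex.combo_affine_apply hab
    _ ≤ a • f x + b • f y := by gcongr <;> exact hg _ ‹_›

namespace Matrix

variable {𝕜 m n : Type*} [RCLike 𝕜]

theorem convex_setOf_posDef [Fintype n] : Convex ℝ {A : Matrix n n 𝕜 | A.PosDef} :=
  convex_iff_forall_pos.2 fun _ hA _ hB _ _ ha hb _ => (hA.smul ha).add (hB.smul hb)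

variable [Fintype n] [DecidableEq n]

open scoped MatrixOrder in
theorem PosSemidef.trace_mul_nonneg {A B : Matrix n n 𝕜} (hA : A.PosSemidef)
    (hB : B.PosSemidef) : 0 ≤ (A * B).trace := by
  obtain ⟨R, rfl⟩ := CStarAlgebra.nonneg_iff_eq_star_mul_self.1 hA.nonneg
  rw [star_eq_conjTranspose, Matrix.mul_assoc, trace_mul_comm, Matrix.mul_assoc]
  simpa only [Matrix.mul_assoc] using (hB.mul_mul_conjTranspose_same R).trace_nonneg

theorem PosDef.re_det_pos {A : Matrix n n 𝕜} (hA : A.PosDef) : 0 < RCLike.re A.det :=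
  (RCLike.pos_iff.1 hA.det_pos).1

theorem PosDef.im_det_eq_zero {A : Matrix n n 𝕜} (hA : A.PosDef) : RCLike.im A.det = 0 :=
  (RCLike.pos_iff.1 hA.det_pos).2

theorem PosDef.log_re_det_le_re_trace_sub_card {A : Matrix n n 𝕜} (hA : A.PosDef) :
    Real.log (RCLike.re A.det) ≤ RCLike.re A.trace - Fintype.card n := by
  have hev := hA.eigenvalues_pos
  rw [hA.isHermitian.det_eq_prod_eigenvalues, hA.isHermitian.trace_eq_sum_eigenvalues,
    ← RCLike.ofReal_prod, ← RCLike.ofReal_sum, RCLike.ofReal_re, RCLike.ofReal_re,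
    Real.log_prod fun i _ => (hev i).ne', Fintype.card_eq_sum_ones, Nat.cast_sum, Nat.cast_one,
    ← Finset.sum_sub_distrib]
  exact Finset.sum_le_sum fun i _ => Real.log_le_sub_one_of_pos (hev i)

open scoped MatrixOrder in
theorem PosDef.log_re_det_le {A B : Matrix n n 𝕜} (hA : A.PosDef) (hB : B.PosDef) :
    Real.log (RCLike.re A.det) ≤
      Real.log (RCLike.re B.det) + RCLike.re (A * B⁻¹).trace - Fintype.card n := by
  set S := CFC.sqrt B⁻¹
  have hS : S.PosDef := (IsStrictlyPositive.sqrt B⁻¹ hB.inv.isStrictlyPositive).posDef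
  have hSS : S * S = B⁻¹ := CFC.sqrt_mul_sqrt_self _ hB.inv.posSemidef.nonneg
  have hM : (S * A * S).PosDef := by
    simpa only [hS.isHermitian.eq] using
      hA.conjTranspose_mul_mul_same (mulVec_injective_of_isUnit hS.isUnit)
  have htrace : (A * B⁻¹).trace = (S * A * S).trace := by
    rw [← hSS, ← Matrix.mul_assoc, trace_mul_cycle]
  have hdet : (S * A * S).det * B.det = A.det := by
    have hSSB : S.det * S.det * B.det = 1 := by
      rw [← det_mul, hSS, ← det_mul, nonsing_inv_mul _ ((isUnit_iff_isUnit_det B).1 hB.isUnit),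
        det_one]
    rw [det_mul, det_mul]
    linear_combination A.det * hSSB
  have hre : RCLike.re A.det = RCLike.re (S * A * S).det * RCLike.re B.det := by
    rw [← hdet, RCLike.mul_re, hB.im_det_eq_zero, mul_zero, sub_zero]
  rw [hre, Real.log_mul hM.re_det_pos.ne' hB.re_det_pos.ne', htrace]
  linarith [hM.log_re_det_le_re_trace_sub_card]

variable [Fintype m] [DecidableEq m]

theorem PosDef.posSemidef_sub_mul_inv_mul_conjTranspose {C : Matrix m m 𝕜} (hC : C.PosDef)
    {E : Matrix m n 𝕜} (hE : Function.Injective E.mulVec) :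
    (C - E * (Eᴴ * C⁻¹ * E)⁻¹ * Eᴴ).PosSemidef := by
  have hG : (Eᴴ * C⁻¹ * E).PosDef := hC.inv.conjTranspose_mul_mul_same hE
  have := hG.isUnit.invertible
  have hdet := (isUnit_iff_isUnit_det C).1 hC.isUnit
  rw [← PosDef.fromBlocks₂₂ C E hG]
  have hblock : fromBlocks C E Eᴴ (Eᴴ * C⁻¹ * E) =
      (fromCols 1 (C⁻¹ * E))ᴴ * C * fromCols 1 (C⁻¹ * E) := by
    simp [conjTranspose_fromCols_eq_fromRows_conjTranspose, fromRows_mul, hC.isHermitian.inv.eq,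
      ← Matrix.mul_assoc, mul_nonsing_inv C hdet, nonsing_inv_mul_cancel_right _ _ hdet]
  rw [hblock]
  exact hC.posSemidef.conjTranspose_mul_mul_same _

/-- `-logDetGramGrad E C₀` is the gradient of `C ↦ log det (Eᴴ C⁻¹ E)` at `C₀`. -/
noncomputable def logDetGramGrad (E : Matrix m n 𝕜) (C₀ : Matrix m m 𝕜) : Matrix m m 𝕜 :=
  C₀⁻¹ * E * (Eᴴ * C₀⁻¹ * E)⁻¹ * Eᴴ * C₀⁻¹

variable {E : Matrix m n 𝕜} {C₀ C : Matrix m m 𝕜}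

theorem trace_logDetGramGrad_mul_self (hC₀ : C₀.PosDef) (hE : Function.Injective E.mulVec) :
    (logDetGramGrad E C₀ * C₀).trace = Fintype.card n := by
  have hM₀ : (Eᴴ * C₀⁻¹ * E).PosDef := hC₀.inv.conjTranspose_mul_mul_same hE
  rw [logDetGramGrad, nonsing_inv_mul_cancel_right _ _ ((isUnit_iff_isUnit_det _).1 hC₀.isUnit),
    trace_mul_comm]
  simp only [← Matrix.mul_assoc]
  rw [mul_nonsing_inv _ ((isUnit_iff_isUnit_det _).1 hM₀.isUnit), trace_one]

theorem log_re_det_gram_tangent_le (hC₀ : C₀.PosDef) (hC : C.PosDef)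
    (hE : Function.Injective E.mulVec) :
    Real.log (RCLike.re (Eᴴ * C₀⁻¹ * E).det) + Fintype.card n
        - RCLike.re (logDetGramGrad E C₀ * C).trace ≤
      Real.log (RCLike.re (Eᴴ * C⁻¹ * E).det) := by
  set M₀ := Eᴴ * C₀⁻¹ * E
  set G := Eᴴ * C⁻¹ * E
  have hM₀ : M₀.PosDef := hC₀.inv.conjTranspose_mul_mul_same hE
  have hG : G.PosDef := hC.inv.conjTranspose_mul_mul_same hE
  have hP : (logDetGramGrad E C₀).PosSemidef := by
    have := hM₀.inv.posSemidef.mul_mul_conjTranspose_same (C₀⁻¹ * E)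
    rwa [conjTranspose_mul, hC₀.isHermitian.inv.eq, ← Matrix.mul_assoc] at this
  have hPE : Eᴴ * logDetGramGrad E C₀ * E = M₀ := by
    calc Eᴴ * logDetGramGrad E C₀ * E = M₀ * M₀⁻¹ * M₀ := by
          simp only [logDetGramGrad, M₀, Matrix.mul_assoc]
      _ = M₀ := by rw [mul_nonsing_inv _ ((isUnit_iff_isUnit_det _).1 hM₀.isUnit), Matrix.one_mul]
  have htrace : RCLike.re (M₀ * G⁻¹).trace ≤ RCLike.re (logDetGramGrad E C₀ * C).trace := by
    have := (RCLike.le_iff_re_im.1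
      (hP.trace_mul_nonneg (hC.posSemidef_sub_mul_inv_mul_conjTranspose hE))).1
    rw [Matrix.mul_sub, trace_sub, map_sub, ← Matrix.mul_assoc, ← Matrix.mul_assoc,
      trace_mul_cycle, ← Matrix.mul_assoc, hPE, map_zero] at this
    linarith
  linarith [hM₀.log_re_det_le hG]

end Matrix

/-- Convexity claim of Lemma 2: for `E` of full column rank, the function
`C ↦ log (Re det (Eᴴ C⁻¹ E))` is convex on the set of Hermitian positive definite
matrices (a subset of the real vector space of `m×m` complex matrices). -/
theorem stmt_5 (m n : ℕ) (E : Matrix (Fin m) (Fin n) ℂ)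
    (hE : Function.Injective E.mulVec) :
    ConvexOn ℝ {C : Matrix (Fin m) (Fin m) ℂ | C.PosDef}
      (fun C => Real.log ((Eᴴ * C⁻¹ * E).det.re)) := by
  refine convexOn_of_forall_exists_affineMap convex_setOf_posDef fun C₀ hC₀ => ?_
  let tangent : Matrix (Fin m) (Fin m) ℂ →ₗ[ℝ] ℝ :=
    Complex.reLm ∘ₗ traceLinearMap _ ℝ ℂ ∘ₗ LinearMap.mulLeft ℝ (logDetGramGrad E C₀)
  refine ⟨AffineMap.const ℝ _ (Real.log (Eᴴ * C₀⁻¹ * E).det.re + n) - tangent.toAffineMap,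
    ?_, fun C hC => ?_⟩
  · simp [tangent, trace_logDetGramGrad_mul_self hC₀ hE]
  · simpa [tangent] using log_re_det_gram_tangent_le hC₀ hC hE
end

section
/- Let n, N be positive integers, u ∈ {1,…,n}, h ∈ ℂ^N a channel vector, t : {1,…,n} → ℂ^N beamforming vectors, σ² > 0, and Γ ∈ ℝ. Write a_v = hᴴ t_v, define SINR = |a_u|² / (Σ_{v ≠ u} |a_v|² + σ²), and for δ ∈ ℂ define the mean-square error f(δ) = |1 − δ·a_u|² + Σ_{v ≠ u} |δ·a_v|² + |δ|²·σ². Then log(1 + SINR) ≥ Γ if and only if there exist a real w > 0 and δ ∈ ℂ such that −w·f(δ) + log w + 1 ≥ Γ. -/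
open scoped ComplexConjugate

/-!
For fixed `δ`, the concave function `w ↦ -w f(δ) + log w + 1` is maximised at `w = 1 / f(δ)`
with value `-log f(δ)` (this is `log x ≤ x - 1`). Writing `A = |a_u|²` and `T` for the
interference-plus-noise power, completing the square gives
`(A + T) f(δ) = T + |(A + T) δ - conj a_u|²`, so the minimum mean-square error is
`T / (A + T) = 1 / (1 + SINR)`, attained by the MMSE receiver `δ = conj a_u / (A + T)`.
Hence the best value of the WMMSE objective is exactly `log (1 + SINR)`.
-/

section MeanSquareError

variable {𝕜 : Type*} [RCLike 𝕜]

/-- The paper's `f(δ)`, with the interference and the noise merged into one power `T`. -/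
def mse (a : 𝕜) (T : ℝ) (δ : 𝕜) : ℝ := ‖1 - δ * a‖ ^ 2 + ‖δ‖ ^ 2 * T

theorem mse_mul_eq (a : 𝕜) (T : ℝ) (δ : 𝕜) :
    (‖a‖ ^ 2 + T) * mse a T δ = T + ‖((‖a‖ ^ 2 + T : ℝ) : 𝕜) * δ - conj a‖ ^ 2 := by
  apply RCLike.ofReal_injective (K := 𝕜)
  simp only [mse, ← RCLike.conj_mul, map_sub, map_mul, map_one, RCLike.conj_conj, map_add,
    map_pow, RCLike.conj_ofReal]
  ring

theorem div_le_mse {T : ℝ} (hT : 0 < T) (a δ : 𝕜) : T / (‖a‖ ^ 2 + T) ≤ mse a T δ := by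
  rw [div_le_iff₀' (by positivity), mse_mul_eq]
  exact le_add_of_nonneg_right (sq_nonneg _)

theorem mse_conj_div {T : ℝ} (hT : 0 < T) (a : 𝕜) :
    mse a T (conj a / ((‖a‖ ^ 2 + T : ℝ) : 𝕜)) = T / (‖a‖ ^ 2 + T) := by
  have hS : 0 < ‖a‖ ^ 2 + T := by positivity
  rw [eq_div_iff hS.ne', mul_comm, mse_mul_eq, mul_div_cancel₀ _ (RCLike.ofReal_ne_zero.2 hS.ne'),
    sub_self, norm_zero]
  ring

theorem exists_neg_log_mse_ge_iff {T Γ : ℝ} (hT : 0 < T) (a : 𝕜) :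
    (∃ δ, -Real.log (mse a T δ) ≥ Γ) ↔ -Real.log (T / (‖a‖ ^ 2 + T)) ≥ Γ := by
  refine ⟨fun ⟨δ, hΓ⟩ => hΓ.trans ?_, fun hΓ => ⟨_, (mse_conj_div hT a).symm ▸ hΓ⟩⟩
  exact neg_le_neg (Real.log_le_log (by positivity) (div_le_mse hT a δ))

end MeanSquareError

namespace Real

theorem neg_mul_add_log_add_one_le_neg_log {e w : ℝ} (he : 0 < e) (hw : 0 < w) :
    -w * e + log w + 1 ≤ -log e := by
  have := log_le_sub_one_of_pos (mul_pos hw he)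
  rw [log_mul hw.ne' he.ne'] at this
  linarith

theorem exists_pos_neg_mul_add_log_add_one_ge_iff {e Γ : ℝ} (he : 0 < e) :
    (∃ w, 0 < w ∧ -w * e + log w + 1 ≥ Γ) ↔ -log e ≥ Γ := by
  refine ⟨fun ⟨w, hw, hΓ⟩ => hΓ.trans (neg_mul_add_log_add_one_le_neg_log he hw),
    fun hΓ => ⟨e⁻¹, inv_pos.2 he, ?_⟩⟩
  rwa [neg_mul, inv_mul_cancel₀ he.ne', log_inv, neg_add_cancel_comm]

end Real

theorem stmt_11_general (n : ℕ) (u : Fin n)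
    (σ2 : ℝ) (hσ : 0 < σ2) (Γ : ℝ)
    (a : Fin n → ℂ)
    (SINR : ℝ)
    (hSINR : SINR = ‖a u‖ ^ 2
      / ((∑ v ∈ Finset.univ.erase u, ‖a v‖ ^ 2) + σ2))
    (f : ℂ → ℝ)
    (hf : ∀ δ : ℂ, f δ = ‖1 - δ * a u‖ ^ 2
      + ∑ v ∈ Finset.univ.erase u, ‖δ * a v‖ ^ 2
      + ‖δ‖ ^ 2 * σ2) :
    Real.log (1 + SINR) ≥ Γ ↔
      ∃ w : ℝ, 0 < w ∧ ∃ δ : ℂ, -w * f δ + Real.log w + 1 ≥ Γ := by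
  set T := (∑ v ∈ Finset.univ.erase u, ‖a v‖ ^ 2) + σ2
  have hT : 0 < T := by positivity
  have hf_eq : f = mse (a u) T := funext fun δ => by
    simp only [hf, mse, norm_mul, mul_pow, ← Finset.mul_sum, T]
    ring
  have hrate : Real.log (1 + SINR) = -Real.log (T / (‖a u‖ ^ 2 + T)) := by
    rw [← Real.log_inv, inv_div, hSINR]
    congr 1
    field_simp
    ring
  have hmse_pos : ∀ δ, 0 < mse (a u) T δ := fun δ =>
    (div_le_mse hT (a u) δ).trans_lt' (by positivity)
  rw [hrate, ← exists_neg_log_mse_ge_iff hT, hf_eq]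
  calc (∃ δ, -Real.log (mse (a u) T δ) ≥ Γ)
      ↔ ∃ δ, ∃ w, 0 < w ∧ -w * mse (a u) T δ + Real.log w + 1 ≥ Γ :=
        exists_congr fun δ => (Real.exists_pos_neg_mul_add_log_add_one_ge_iff (hmse_pos δ)).symm
    _ ↔ _ := by rw [exists_comm]; simp only [exists_and_left]

/-- Theorem 1 of the paper: the rate QoS constraint `log(1 + SINR_u) ≥ Γ` is
equivalent to the WMMSE constraint `∃ w > 0, ∃ δ, −w f(δ) + log w + 1 ≥ Γ`,
where `a_v = hᴴ t_v` and `f(δ)` is the mean-square error of user `u`. -/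
theorem stmt_11 (n N : ℕ) (hn : 0 < n) (hN : 0 < N) (u : Fin n)
    (h : Fin N → ℂ) (t : Fin n → Fin N → ℂ)
    (σ2 : ℝ) (hσ : 0 < σ2) (Γ : ℝ)
    (a : Fin n → ℂ) (ha : ∀ v, a v = star h ⬝ᵥ t v)
    (SINR : ℝ)
    (hSINR : SINR = ‖a u‖ ^ 2
      / ((∑ v ∈ Finset.univ.erase u, ‖a v‖ ^ 2) + σ2))
    (f : ℂ → ℝ)
    (hf : ∀ δ : ℂ, f δ = ‖1 - δ * a u‖ ^ 2
      + ∑ v ∈ Finset.univ.erase u, ‖δ * a v‖ ^ 2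
      + ‖δ‖ ^ 2 * σ2) :
    Real.log (1 + SINR) ≥ Γ ↔
      ∃ w : ℝ, 0 < w ∧ ∃ δ : ℂ, -w * f δ + Real.log w + 1 ≥ Γ :=
  stmt_11_general n u σ2 hσ Γ a SINR hSINR f hf
end

section
/- Let c > 0 be a real number and m ∈ ℂ a nonzero complex number. Define f(x) = c·|x|² − 2·Re(x·m) for x ∈ ℂ, and let x* = conj(m)/c if |m| ≤ 2c and x* = 2·conj(m)/|m| otherwise. Then |x*| ≤ 2 and for every x ∈ ℂ with |x| ≤ 2, f(x*) ≤ f(x). -/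
open ComplexConjugate

/-! The objective is bounded below by `c‖x‖² - 2‖x‖‖m‖` (Cauchy–Schwarz for `Re (x m)`), a
function of `‖x‖` alone, and equality holds exactly when `x` is a nonnegative multiple of
`conj m`. So it suffices to minimize the parabola `c r² - 2‖m‖ r` over `r ≤ 2`: the minimizer is
its vertex `‖m‖ / c` when that is feasible and the endpoint `2` otherwise, and `x*` is the
multiple of `conj m` of that norm. -/

theorem Complex.re_mul_le_norm_mul_norm (x m : ℂ) : (x * m).re ≤ ‖x‖ * ‖m‖ :=
  (Complex.re_le_norm _).trans_eq (norm_mul x m)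

theorem Complex.re_ofReal_mul_conj_mul {t : ℝ} (ht : 0 ≤ t) (m : ℂ) :
    ((t : ℂ) * conj m * m).re = ‖(t : ℂ) * conj m‖ * ‖m‖ := by
  rw [mul_assoc, Complex.conj_mul', norm_mul, Complex.norm_conj, Complex.norm_real,
    Real.norm_of_nonneg ht, ← Complex.ofReal_pow, ← Complex.ofReal_mul, Complex.ofReal_re]
  ring

theorem quadratic_clamped_vertex_le {c M ρ r : ℝ} (hc : 0 < c) (hr : r ≤ ρ) :
    let s := if M ≤ ρ * c then M / c else ρ
    c * s ^ 2 - 2 * M * s ≤ c * r ^ 2 - 2 * M * r := by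
  dsimp only
  split_ifs with hM
  · have hsq : c * r ^ 2 - 2 * M * r - (c * (M / c) ^ 2 - 2 * M * (M / c))
        = c * (r - M / c) ^ 2 := by
      field_simp
      ring
    nlinarith [mul_nonneg hc.le (sq_nonneg (r - M / c))]
  · have hfactor : c * r ^ 2 - 2 * M * r - (c * ρ ^ 2 - 2 * M * ρ)
        = (ρ - r) * (2 * M - c * (r + ρ)) := by ring
    have hslope : 0 ≤ 2 * M - c * (r + ρ) := by nlinarith
    nlinarith [mul_nonneg (sub_nonneg.2 hr) hslope]

theorem stmt_14_general (c : ℝ) (hc : 0 < c) (m : ℂ)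
    (f : ℂ → ℝ) (hf : ∀ x : ℂ, f x = c * ‖x‖ ^ 2 - 2 * (x * m).re)
    (xstar : ℂ)
    (hx : xstar = if ‖m‖ ≤ 2 * c then (starRingEnd ℂ) m / (c : ℂ)
      else 2 * (starRingEnd ℂ) m / (‖m‖ : ℂ)) :
    ‖xstar‖ ≤ 2 ∧
    ∀ x : ℂ, ‖x‖ ≤ 2 → f xstar ≤ f x := by
  set M := ‖m‖
  set t : ℝ := if M ≤ 2 * c then c⁻¹ else 2 / M
  have ht : 0 ≤ t := by unfold t; split_ifs <;> positivity
  have hxt : xstar = (t : ℂ) * conj m := by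
    rw [hx]; unfold t; split_ifs <;> push_cast <;> ring
  have hnorm : ‖xstar‖ = if M ≤ 2 * c then M / c else 2 := by
    rw [hxt, norm_mul, Complex.norm_conj, Complex.norm_real, Real.norm_of_nonneg ht]
    unfold t
    split_ifs with hM
    · exact inv_mul_eq_div c M
    · exact div_mul_cancel₀ 2 (by linarith [not_le.1 hM] : 0 < M).ne'
  have hfstar : f xstar = c * ‖xstar‖ ^ 2 - 2 * M * ‖xstar‖ := by
    rw [hf, hxt, Complex.re_ofReal_mul_conj_mul ht]
    ring
  refine ⟨?_, fun x hx2 => ?_⟩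
  · rw [hnorm]
    split_ifs with hM
    · exact (div_le_iff₀ hc).2 hM
    · exact le_rfl
  · calc f xstar = c * ‖xstar‖ ^ 2 - 2 * M * ‖xstar‖ := hfstar
      _ ≤ c * ‖x‖ ^ 2 - 2 * M * ‖x‖ := hnorm ▸ quadratic_clamped_vertex_le hc hx2
      _ ≤ f x := by
        rw [hf]
        nlinarith [Complex.re_mul_le_norm_mul_norm x m]

/-- Closed-form analog beamformer entry under the double-phase-shifter magnitude
constraint: `x* = conj(m)/c` if `|m| ≤ 2c` and `x* = 2 conj(m)/|m|` otherwise
minimizes `f(x) = c|x|² − 2 Re(x m)` over `{x : |x| ≤ 2}`. -/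
theorem stmt_14 (c : ℝ) (hc : 0 < c) (m : ℂ) (hm : m ≠ 0)
    (f : ℂ → ℝ) (hf : ∀ x : ℂ, f x = c * ‖x‖ ^ 2 - 2 * (x * m).re)
    (xstar : ℂ)
    (hx : xstar = if ‖m‖ ≤ 2 * c then (starRingEnd ℂ) m / (c : ℂ)
      else 2 * (starRingEnd ℂ) m / (‖m‖ : ℂ)) :
    ‖xstar‖ ≤ 2 ∧
    ∀ x : ℂ, ‖x‖ ≤ 2 → f xstar ≤ f x :=
  stmt_14_general c hc m f hf xstar hx
end
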